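/- The constant term (in x, y, z) of the Laurent expansion of 1/(1 − μ^{1/4}·(x⁴+y⁴+z⁴+1)/(xyz)), computed as (2πi)^{-3} ∫_{𝕋³} (1 − μ^{1/4}(x⁴+y⁴+z⁴+1)/(xyz))^{-1} dx/x · dy/y · dz/z for |μ| sufficiently small, equals ₃F₂(1/4, 1/2, 3/4; 1, 1; 256μ). Equivalently, for each n ≥ 0 the constant term of ((x⁴+y⁴+z⁴+1)/(xyz))^{4n} contributes the coefficient (4n)!/(n!)⁴ = multinomial count, and the coefficient of μⁿ in the period is (1/4)ₙ(1/2)ₙ(3/4)ₙ/(n!)³·256ⁿ. -/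

import Mathlib

/-!
On the unit torus `S = (x⁴ + y⁴ + z⁴ + 1)/(xyz)` has modulus at most `4`, so for `|t| < 1/4` the
geometric series `(1 - tS)⁻¹ = Σ tᵐ Sᵐ` converges uniformly and may be integrated termwise: the
period is `Σ tᵐ CT(Sᵐ)`, where the constant term `CT` is `(2π)⁻³` times the integral over the
torus. Integrating out one variable at a time, the binomial theorem and the orthogonality of the
characters `e^{ikθ}` give `CT(Sᵐ) = 0` for `4 ∤ m` and
`CT(S⁴ⁿ) = C(4n, n) C(3n, n) C(2n, n) = (4n)!/(n!)⁴`. The ratio of consecutive values of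
`(4n)!/(n!)⁴` is `256 (n + 1/4)(n + 1/2)(n + 3/4)/(n + 1)³`, which identifies the series with
`₃F₂(1/4, 1/2, 3/4; 1, 1; 256 t⁴)`.
-/

open scoped Real

/-- The generalized hypergeometric series `₃F₂(1/4, 1/2, 3/4; 1, 1; x)`
`= Σ_{n≥0} (1/4)ₙ(1/2)ₙ(3/4)ₙ/(n!)³·xⁿ` over `ℂ`. -/
noncomputable def F32quartic (x : ℂ) : ℂ :=
  ∑' n : ℕ, ((ascPochhammer ℂ n).eval (1 / 4) * (ascPochhammer ℂ n).eval (1 / 2)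
      * (ascPochhammer ℂ n).eval (3 / 4)) / ((Nat.factorial n : ℂ)) ^ 3 * x ^ n

open Complex Polynomial intervalIntegral
open scoped Nat

section SeriesIntegral

variable {E : Type*} [NormedAddCommGroup E] [NormedSpace ℝ E] {a b : ℝ} {C : ℕ → ℝ}

theorem hasSum_intervalIntegral_of_norm_le {F : ℕ → ℝ → E} {G : ℝ → E}
    (hF : ∀ n, Continuous (F n)) (hFC : ∀ n t, ‖F n t‖ ≤ C n) (hC : Summable C)
    (hG : ∀ t, HasSum (fun n => F n t) (G t)) :
    HasSum (fun n => ∫ t in a..b, F n t) (∫ t in a..b, G t) :=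
  hasSum_integral_of_dominated_convergence (fun n _ => C n)
    (fun n => (hF n).aestronglyMeasurable) (fun n => .of_forall fun t _ => hFC n t)
    (.of_forall fun _ _ => hC) intervalIntegrable_const (.of_forall fun t _ => hG t)

theorem hasSum_iteratedIntegral_of_norm_le {F : ℕ → ℝ → ℝ → ℝ → E} {G : ℝ → ℝ → ℝ → E}
    (hF : ∀ n, Continuous fun p : ℝ × ℝ × ℝ => F n p.1 p.2.1 p.2.2)
    (hFC : ∀ n x y z, ‖F n x y z‖ ≤ C n) (hC : Summable C)
    (hG : ∀ x y z, HasSum (fun n => F n x y z) (G x y z)) :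
    HasSum (fun n => ∫ x in a..b, ∫ y in a..b, ∫ z in a..b, F n x y z)
      (∫ x in a..b, ∫ y in a..b, ∫ z in a..b, G x y z) := by
  have inner_cont (n : ℕ) : Continuous fun p : ℝ × ℝ => ∫ z in a..b, F n p.1 p.2 z :=
    continuous_parametric_intervalIntegral_of_continuous'
      (f := fun (p : ℝ × ℝ) z => F n p.1 p.2 z)
      ((hF n).comp (by fun_prop : Continuous fun q : (ℝ × ℝ) × ℝ => (q.1.1, q.1.2, q.2)) :) a b
  have inner_le (n : ℕ) (x y : ℝ) : ‖∫ z in a..b, F n x y z‖ ≤ C n * |b - a| :=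
    norm_integral_le_of_norm_le_const fun z _ => hFC n x y z
  have middle_le (n : ℕ) (x : ℝ) :
      ‖∫ y in a..b, ∫ z in a..b, F n x y z‖ ≤ C n * |b - a| * |b - a| :=
    norm_integral_le_of_norm_le_const fun y _ => inner_le n x y
  refine hasSum_intervalIntegral_of_norm_le
    (fun n => continuous_parametric_intervalIntegral_of_continuous' (inner_cont n) a b)
    middle_le ((hC.mul_right _).mul_right _) fun x => ?_
  refine hasSum_intervalIntegral_of_norm_le
    (fun n => (inner_cont n).comp (by fun_prop : Continuous fun y : ℝ => (x, y)))
    (inner_le · x) (hC.mul_right _) fun y => ?_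
  exact hasSum_intervalIntegral_of_norm_le
    (fun n => (hF n).comp (by fun_prop : Continuous fun z : ℝ => (x, y, z)))
    (hFC · x y) hC (hG x y)

end SeriesIntegral

theorem integral_eval_exp_mul_inv_pow (p : ℂ[X]) (k : ℕ) :
    ∫ θ in (0 : ℝ)..2 * π, p.eval (exp (I * θ)) * (exp (I * θ) ^ k)⁻¹ = 2 * π * p.coeff k := by
  have : Fact (0 < 2 * π) := ⟨Real.two_pi_pos⟩
  have hπ : (π : ℂ) ≠ 0 := ofReal_ne_zero.mpr Real.pi_ne_zero
  have integrand (θ : ℝ) : fourier (T := 2 * π) (-k) θ • p.toAddCircle θ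
      = p.eval (exp (I * θ)) * (exp (I * θ) ^ k)⁻¹ := by
    rw [fourier_coe_apply, smul_eq_mul, mul_comm, ← exp_nat_mul, ← exp_neg]
    congr 1
    · simp [toAddCircle, AddCircle.toCircle_apply_mk, mul_comm]
    · congr 1
      push_cast
      field_simp
  have h := fourierCoeff_eq_intervalIntegral p.toAddCircle k 0
  rw [fourierCoeff_toAddCircle_natCast, zero_add] at h
  simp_rw [h, integrand, Complex.real_smul]
  push_cast
  field_simp

theorem integral_add_exp_pow_pow_mul_inv_pow {d : ℕ} (hd : 0 < d) (w : ℂ) (N m : ℕ) :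
    ∫ θ in (0 : ℝ)..2 * π, (w + exp (I * θ) ^ d) ^ N * (exp (I * θ) ^ m)⁻¹
      = if d ∣ m then 2 * π * N.choose (m / d) * w ^ (N - m / d) else 0 := by
  have h (θ : ℝ) :
      (w + exp (I * θ) ^ d) ^ N = ((expand ℂ d) ((X + C w) ^ N)).eval (exp (I * θ)) := by
    simp [add_comm]
  simp_rw [h, integral_eval_exp_mul_inv_pow, coeff_expand hd, coeff_X_add_C_pow]
  split_ifs <;> ring

noncomputable def quarticLaurent (x y z : ℂ) : ℂ :=
  (x ^ 4 + y ^ 4 + z ^ 4 + 1) / (x * y * z)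

theorem norm_quarticLaurent_le {x y z : ℂ} (hx : ‖x‖ = 1) (hy : ‖y‖ = 1) (hz : ‖z‖ = 1) :
    ‖quarticLaurent x y z‖ ≤ 4 := by
  rw [quarticLaurent, norm_div, norm_mul, norm_mul, hx, hy, hz, mul_one, mul_one, div_one]
  calc ‖x ^ 4 + y ^ 4 + z ^ 4 + 1‖ ≤ ‖x ^ 4‖ + ‖y ^ 4‖ + ‖z ^ 4‖ + ‖(1 : ℂ)‖ := norm_add₄_le
    _ = 4 := by simp [hx, hy, hz]; norm_num

theorem continuous_quarticLaurent_exp :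
    Continuous fun p : ℝ × ℝ × ℝ =>
      quarticLaurent (exp (I * p.1)) (exp (I * p.2.1)) (exp (I * p.2.2)) := by
  unfold quarticLaurent
  exact Continuous.div (by fun_prop) (by fun_prop) fun _ => by simp [exp_ne_zero]

theorem integral_quarticLaurent_pow (x y : ℂ) (m : ℕ) :
    ∫ θ in (0 : ℝ)..2 * π, quarticLaurent x y (exp (I * θ)) ^ m
      = (x ^ m)⁻¹ * (y ^ m)⁻¹ * if 4 ∣ m
          then 2 * π * m.choose (m / 4) * (x ^ 4 + y ^ 4 + 1) ^ (m - m / 4) else 0 := by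
  have h (z : ℂ) : quarticLaurent x y z ^ m
      = (x ^ m)⁻¹ * (y ^ m)⁻¹ * ((x ^ 4 + y ^ 4 + 1 + z ^ 4) ^ m * (z ^ m)⁻¹) := by
    rw [quarticLaurent, div_pow, mul_pow, mul_pow]; ring
  simp_rw [h, integral_const_mul, integral_add_exp_pow_pow_mul_inv_pow four_pos]

theorem iteratedIntegral_quarticLaurent_pow_of_not_dvd {m : ℕ} (hm : ¬4 ∣ m) :
    ∫ θ₁ in (0 : ℝ)..2 * π, ∫ θ₂ in (0 : ℝ)..2 * π, ∫ θ₃ in (0 : ℝ)..2 * π,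
      quarticLaurent (exp (I * θ₁)) (exp (I * θ₂)) (exp (I * θ₃)) ^ m = 0 := by
  simp [integral_quarticLaurent_pow, hm]

theorem choose_mul_choose_mul_choose_mul_factorial_pow (n : ℕ) :
    (4 * n).choose n * (3 * n).choose n * (2 * n).choose n * n ! ^ 4 = (4 * n)! := by
  have h2 := Nat.add_choose_mul_factorial_mul_factorial n n
  have h3 := Nat.add_choose_mul_factorial_mul_factorial (2 * n) n
  have h4 := Nat.add_choose_mul_factorial_mul_factorial (3 * n) n
  rw [show n + n = 2 * n by ring] at h2
  rw [show 2 * n + n = 3 * n by ring] at h3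
  rw [show 3 * n + n = 4 * n by ring] at h4
  rw [← h4, ← h3, ← h2]
  ring

theorem iteratedIntegral_quarticLaurent_pow_four_mul (n : ℕ) :
    ∫ θ₁ in (0 : ℝ)..2 * π, ∫ θ₂ in (0 : ℝ)..2 * π, ∫ θ₃ in (0 : ℝ)..2 * π,
      quarticLaurent (exp (I * θ₁)) (exp (I * θ₂)) (exp (I * θ₃)) ^ (4 * n)
      = (2 * π) ^ 3 * ((4 * n)! / (n ! : ℂ) ^ 4) := by
  have hn : 4 * n / 4 = n := by omega
  have hdvd : 4 ∣ 4 * n := dvd_mul_right 4 n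
  have level₃ (x y : ℂ) : ∫ θ₃ in (0 : ℝ)..2 * π, quarticLaurent x y (exp (I * θ₃)) ^ (4 * n)
      = 2 * π * (4 * n).choose n * (x ^ (4 * n))⁻¹
        * ((x ^ 4 + 1 + y ^ 4) ^ (3 * n) * (y ^ (4 * n))⁻¹) := by
    rw [integral_quarticLaurent_pow, if_pos hdvd, hn, show 4 * n - n = 3 * n by omega]
    ring
  have level₂ (x : ℂ) : ∫ θ₂ in (0 : ℝ)..2 * π, ∫ θ₃ in (0 : ℝ)..2 * π,
        quarticLaurent x (exp (I * θ₂)) (exp (I * θ₃)) ^ (4 * n)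
      = (2 * π) ^ 2 * (4 * n).choose n * (3 * n).choose n
        * ((1 + x ^ 4) ^ (2 * n) * (x ^ (4 * n))⁻¹) := by
    simp_rw [level₃, integral_const_mul, integral_add_exp_pow_pow_mul_inv_pow four_pos,
      if_pos hdvd, hn, show 3 * n - n = 2 * n by omega]
    ring
  simp_rw [level₂, integral_const_mul, integral_add_exp_pow_pow_mul_inv_pow four_pos,
    if_pos hdvd, hn, one_pow, ← choose_mul_choose_mul_choose_mul_factorial_pow n]
  have hf : (n ! : ℂ) ≠ 0 := Nat.cast_ne_zero.mpr n.factorial_ne_zero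
  push_cast
  field_simp

theorem hasSum_iteratedIntegral_inv_one_sub_mul_quarticLaurent {t : ℂ} (ht : ‖t‖ < 1 / 4) :
    HasSum (fun n : ℕ => (2 * π) ^ 3 * ((4 * n)! / (n ! : ℂ) ^ 4 * t ^ (4 * n)))
      (∫ θ₁ in (0 : ℝ)..2 * π, ∫ θ₂ in (0 : ℝ)..2 * π, ∫ θ₃ in (0 : ℝ)..2 * π,
        (1 - t * quarticLaurent (exp (I * θ₁)) (exp (I * θ₂)) (exp (I * θ₃)))⁻¹) := by
  have hbound (θ₁ θ₂ θ₃ : ℝ) :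
      ‖t * quarticLaurent (exp (I * θ₁)) (exp (I * θ₂)) (exp (I * θ₃))‖ ≤ 4 * ‖t‖ := by
    rw [norm_mul, mul_comm]
    gcongr
    exact norm_quarticLaurent_le (by simp [norm_exp]) (by simp [norm_exp]) (by simp [norm_exp])
  have hsum := hasSum_iteratedIntegral_of_norm_le (a := 0) (b := 2 * π)
    (F := fun m θ₁ θ₂ θ₃ => (t * quarticLaurent (exp (I * θ₁)) (exp (I * θ₂)) (exp (I * θ₃))) ^ m)
    (fun m => (continuous_const.mul continuous_quarticLaurent_exp).pow m)
    (fun m θ₁ θ₂ θ₃ => by rw [norm_pow]; gcongr; exact hbound θ₁ θ₂ θ₃)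
    (summable_geometric_of_lt_one (by positivity) (by linarith))
    fun θ₁ θ₂ θ₃ => hasSum_geometric_of_norm_lt_one ((hbound θ₁ θ₂ θ₃).trans_lt (by linarith))
  simp_rw [mul_pow t, integral_const_mul] at hsum
  rw [← (mul_right_injective₀ (four_ne_zero' ℕ)).hasSum_iff fun m hm => by
    rw [iteratedIntegral_quarticLaurent_pow_of_not_dvd fun ⟨n, hn⟩ => hm ⟨n, hn.symm⟩, mul_zero]]
    at hsum
  refine hsum.congr_fun fun n => ?_
  rw [Function.comp_apply, iteratedIntegral_quarticLaurent_pow_four_mul]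
  ring

theorem factorial_four_mul_div_factorial_pow_four {K : Type*} [Field K] [CharZero K] (n : ℕ) :
    ((4 * n)! : K) / (n ! : K) ^ 4
      = 256 ^ n * (ascPochhammer K n).eval (1 / 4) * (ascPochhammer K n).eval (1 / 2)
          * (ascPochhammer K n).eval (3 / 4) / (n ! : K) ^ 3 := by
  induction n with
  | zero => simp
  | succ n ih =>
    have hfac : (4 * (n + 1))!
        = (4 * n + 4) * (4 * n + 3) * (4 * n + 2) * (4 * n + 1) * (4 * n)! := by
      rw [show 4 * (n + 1) = 4 * n + 3 + 1 by ring]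
      simp only [Nat.factorial_succ]
      ring
    have hf (k : ℕ) : (k ! : K) ≠ 0 := Nat.cast_ne_zero.mpr k.factorial_ne_zero
    rw [div_eq_div_iff (pow_ne_zero _ (hf n)) (pow_ne_zero _ (hf n))] at ih
    rw [div_eq_div_iff (pow_ne_zero _ (hf (n + 1))) (pow_ne_zero _ (hf (n + 1))), hfac,
      Nat.factorial_succ, ascPochhammer_succ_eval, ascPochhammer_succ_eval,
      ascPochhammer_succ_eval]
    push_cast
    linear_combination
      (4 * (n : K) + 4) * (4 * n + 3) * (4 * n + 2) * (4 * n + 1) * (n + 1) ^ 3 * ih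

/-- The constant term of `1/(1 − t·(x⁴+y⁴+z⁴+1)/(xyz))` (with `t = μ^{1/4}`), computed
as `(2πi)⁻³ ∫_{𝕋³} (1 − t(x⁴+y⁴+z⁴+1)/(xyz))⁻¹ dx/x dy/y dz/z` with `x = e^{iθ₁}` etc.
(so `dx/x = i·dθ₁`), equals `₃F₂(1/4,1/2,3/4;1,1;256μ)` with `μ = t⁴`, for `|t|`
sufficiently small; the underlying coefficient identity is
`(4n)!/(n!)⁴ = 256ⁿ·(1/4)ₙ(1/2)ₙ(3/4)ₙ/(n!)³`. -/
theorem quartic_period_integral :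
    (∃ ε > (0 : ℝ), ∀ t : ℂ, ‖t‖ < ε →
      (1 / (2 * (π : ℂ) * Complex.I) ^ 3) *
        ∫ θ₁ in (0 : ℝ)..(2 * π), ∫ θ₂ in (0 : ℝ)..(2 * π), ∫ θ₃ in (0 : ℝ)..(2 * π),
          Complex.I ^ 3 *
            (1 - t * ((Complex.exp (Complex.I * θ₁) ^ 4 + Complex.exp (Complex.I * θ₂) ^ 4
                + Complex.exp (Complex.I * θ₃) ^ 4 + 1)
              / (Complex.exp (Complex.I * θ₁) * Complex.exp (Complex.I * θ₂)
                  * Complex.exp (Complex.I * θ₃))))⁻¹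
      = F32quartic (256 * t ^ 4)) ∧
    (∀ n : ℕ, ((Nat.factorial (4 * n) : ℚ)) / ((Nat.factorial n : ℚ)) ^ 4
      = 256 ^ n * (ascPochhammer ℚ n).eval (1 / 4) * (ascPochhammer ℚ n).eval (1 / 2)
          * (ascPochhammer ℚ n).eval (3 / 4) / ((Nat.factorial n : ℚ)) ^ 3) := by
  refine ⟨⟨1 / 4, by norm_num, fun t ht => ?_⟩, factorial_four_mul_div_factorial_pow_four⟩
  have hπ : (2 * π : ℂ) ^ 3 ≠ 0 := pow_ne_zero 3 (by simp [Real.pi_ne_zero])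
  have hseries : HasSum
      (fun n : ℕ => (ascPochhammer ℂ n).eval (1 / 4) * (ascPochhammer ℂ n).eval (1 / 2)
        * (ascPochhammer ℂ n).eval (3 / 4) / (n ! : ℂ) ^ 3 * (256 * t ^ 4) ^ n)
      (((2 * π : ℂ) ^ 3)⁻¹ * ∫ θ₁ in (0 : ℝ)..2 * π, ∫ θ₂ in (0 : ℝ)..2 * π,
        ∫ θ₃ in (0 : ℝ)..2 * π,
          (1 - t * quarticLaurent (exp (I * θ₁)) (exp (I * θ₂)) (exp (I * θ₃)))⁻¹) := by
    refine ((hasSum_iteratedIntegral_inv_one_sub_mul_quarticLaurent ht).mul_left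
      ((2 * π : ℂ) ^ 3)⁻¹).congr_fun fun n => ?_
    rw [inv_mul_cancel_left₀ hπ, factorial_four_mul_div_factorial_pow_four]
    ring
  rw [F32quartic, hseries.tsum_eq]
  simp only [integral_const_mul]
  rw [mul_pow, one_div, mul_inv, mul_assoc, inv_mul_cancel_left₀ (pow_ne_zero 3 I_ne_zero)]
  rfl
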